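/- arXiv:2012.00734 — 4 statements merged into one kernel-verified Lean document; each statement's English description precedes it below -/
import Mathlib

section
/- For the weight w(v) = e^{-v^2}/\sqrt{\pi} and any real ξ ≠ 0, the limit as λ → -1 from the right (λ real) of ω(λ,ξ) := 1 - ∫_ℝ (1+λ) w(v) / ((1+λ)^2 + (vξ)^2) dv equals 1 - √π/|ξ|. -/
open MeasureTheory Real Filter

noncomputable def w (v : ℝ) : ℝ := Real.exp (-v ^ 2) / Real.sqrt Real.pi

noncomputable def omg (l ξ : ℝ) : ℝ :=
  1 - ∫ v : ℝ, (1 + l) * w v / ((1 + l) ^ 2 + (v * ξ) ^ 2)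

/-
With ε = 1 + λ and the substitution v = ε u / |ξ|, the integral becomes
(1/|ξ|) ∫ w(ε u / |ξ|) / (1 + u²) du: the Poisson kernel is an approximate identity.
Since w is bounded and continuous, dominated convergence (with dominating function
sup w / (1 + u²)) gives the limit w(0) · π / |ξ| = √π / |ξ| as ε → 0⁺.
-/

open Topology

theorem integral_mul_div_sq_add_mul_sq (f : ℝ → ℝ) {a ε : ℝ} (ha : a ≠ 0) (hε : 0 < ε) :
    ∫ v, ε * f v / (ε ^ 2 + (v * a) ^ 2) = (∫ u, f (ε / |a| * u) / (1 + u ^ 2)) / |a| := by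
  have hc : 0 < ε / |a| := div_pos hε (abs_pos.mpr ha)
  have hsubst := Measure.integral_comp_mul_left (fun v ↦ ε * f v / (ε ^ 2 + (v * a) ^ 2)) (ε / |a|)
  rw [abs_inv, abs_of_pos hc, smul_eq_mul, eq_inv_mul_iff_mul_eq₀ hc.ne'] at hsubst
  rw [← hsubst, ← integral_const_mul, ← integral_div]
  congr 1 with u
  have hpos : 0 < 1 + u ^ 2 := by positivity
  have hsq : (ε / |a| * u * a) ^ 2 = ε ^ 2 * u ^ 2 := by
    rw [mul_pow, mul_pow, div_pow, sq_abs]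
    field_simp
  rw [hsq]
  field_simp

theorem tendsto_integral_mul_div_sq_add_mul_sq {f : ℝ → ℝ} {C : ℝ} (hf : Continuous f)
    (hC : ∀ x, |f x| ≤ C) {a : ℝ} (ha : a ≠ 0) :
    Tendsto (fun ε ↦ ∫ v, ε * f v / (ε ^ 2 + (v * a) ^ 2)) (𝓝[>] 0) (𝓝 (π * f 0 / |a|)) := by
  have hlim : Tendsto (fun ε ↦ ∫ u, f (ε / |a| * u) / (1 + u ^ 2)) (𝓝 0) (𝓝 (π * f 0)) := by
    rw [← integral_univ_inv_one_add_sq, ← integral_mul_const]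
    have hcont (ε : ℝ) : Continuous fun u ↦ f (ε / |a| * u) / (1 + u ^ 2) :=
      (by fun_prop : Continuous _).div (by fun_prop) fun u ↦ by positivity
    refine tendsto_integral_filter_of_dominated_convergence (fun u ↦ C * (1 + u ^ 2)⁻¹)
      (Eventually.of_forall fun ε ↦ (hcont ε).aestronglyMeasurable) (Eventually.of_forall fun ε ↦
        Eventually.of_forall fun u ↦ ?_) (integrable_inv_one_add_sq.const_mul C)
      (Eventually.of_forall fun u ↦ ?_)
    · rw [norm_div, Real.norm_eq_abs, Real.norm_of_nonneg (by positivity), div_eq_mul_inv]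
      gcongr
      exact hC _
    · have : Continuous fun ε ↦ f (ε / |a| * u) / (1 + u ^ 2) := by fun_prop
      simpa [div_eq_inv_mul] using this.tendsto 0
  have hfun : ∀ᶠ ε in 𝓝[>] 0, (∫ u, f (ε / |a| * u) / (1 + u ^ 2)) / |a|
      = ∫ v, ε * f v / (ε ^ 2 + (v * a) ^ 2) :=
    eventually_nhdsWithin_of_forall fun ε hε ↦
      (integral_mul_div_sq_add_mul_sq f ha hε).symm
  exact ((hlim.mono_left nhdsWithin_le_nhds).div_const |a|).congr' hfun

theorem continuous_w : Continuous w := by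
  unfold w; fun_prop

theorem abs_w_le (v : ℝ) : |w v| ≤ 1 / √π := by
  rw [w, abs_of_nonneg (by positivity)]
  gcongr
  exact exp_le_one_iff.mpr (neg_nonpos.mpr (sq_nonneg v))

/-- for ξ ≠ 0, lim_{λ→-1⁺} ω(λ,ξ) = 1 - √π/|ξ|. -/
theorem stmt0 (ξ : ℝ) (hξ : ξ ≠ 0) :
    Tendsto (fun l => omg l ξ) (nhdsWithin (-1) (Set.Ioi (-1)))
      (nhds (1 - Real.sqrt Real.pi / |ξ|)) := by
  have hshift : Tendsto (fun l : ℝ ↦ 1 + l) (𝓝[>] (-1)) (𝓝[>] 0) := by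
    refine tendsto_nhdsWithin_iff.mpr ⟨?_, eventually_nhdsWithin_of_forall fun l hl ↦ ?_⟩
    · exact ((continuous_const_add 1).tendsto' (-1) 0 (by norm_num)).mono_left nhdsWithin_le_nhds
    · simp only [Set.mem_Ioi] at hl ⊢
      linarith
  have hlim := (tendsto_integral_mul_div_sq_add_mul_sq continuous_w abs_w_le hξ).comp hshift
  have hw0 : π * w 0 = √π := by
    simp only [w, ne_eq, OfNat.ofNat_ne_zero, not_false_eq_true, zero_pow, neg_zero, exp_zero]
    rw [mul_one_div, div_sqrt]
  rw [hw0] at hlim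
  exact tendsto_const_nhds.sub hlim
end

section
/- For the weight w(v) = e^{-v^2}/\sqrt{\pi} and any real ξ ≠ 0, the limit as λ → -1 from the left (λ real) of ω(λ,ξ) := 1 - ∫_ℝ (1+λ) w(v) / ((1+λ)^2 + (vξ)^2) dv equals 1 + √π/|ξ|. -/
open MeasureTheory Real Filter

noncomputable def Jint (l ξ : ℝ) : ℝ :=
  ∫ u : ℝ, Real.exp (-((1 + l) * u / ξ) ^ 2) / (1 + u ^ 2)

lemma lemA (l ξ : ℝ) (hξ : ξ ≠ 0) (hl : l < -1) :
    (∫ v : ℝ, (1 + l) * w v / ((1 + l) ^ 2 + (v * ξ) ^ 2))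
      = -(1 / (Real.sqrt Real.pi * |ξ|)) * Jint l ξ := by
  have hεneg : 1 + l < 0 := by linarith
  have hεne : 1 + l ≠ 0 := ne_of_lt hεneg
  have hπ : (0:ℝ) < Real.sqrt Real.pi := Real.sqrt_pos.mpr Real.pi_pos
  set g : ℝ → ℝ := fun u =>
    (1 / ((1 + l) * Real.sqrt Real.pi)) * (Real.exp (-((1 + l) * u / ξ) ^ 2) / (1 + u ^ 2))
    with hg
  have key : (fun v : ℝ => (1 + l) * w v / ((1 + l) ^ 2 + (v * ξ) ^ 2))
      = fun v => g ((ξ / (1 + l)) * v) := by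
    funext v
    have hden : (0:ℝ) < (1 + l) ^ 2 + (v * ξ) ^ 2 := by positivity
    have h1 : (1 + l) * (ξ / (1 + l) * v) / ξ = v := by field_simp
    simp only [hg, w, h1]
    field_simp
  rw [key, MeasureTheory.Measure.integral_comp_mul_left g (ξ / (1 + l)), hg,
    MeasureTheory.integral_const_mul]
  have habs : |(ξ / (1 + l))⁻¹| = -(1 + l) / |ξ| := by
    rw [abs_inv, abs_div, abs_of_neg hεneg, inv_div]
  rw [habs, smul_eq_mul, ← Jint]
  field_simp

lemma lemB (ξ : ℝ) (hξ : ξ ≠ 0) :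
    Tendsto (fun l => Jint l ξ) (nhdsWithin (-1) (Set.Iio (-1))) (nhds Real.pi) := by
  have := MeasureTheory.tendsto_integral_filter_of_dominated_convergence
    (μ := (volume : Measure ℝ))
    (F := fun l (u : ℝ) => Real.exp (-((1 + l) * u / ξ) ^ 2) / (1 + u ^ 2))
    (f := fun u : ℝ => (1 + u ^ 2)⁻¹)
    (bound := fun u : ℝ => (1 + u ^ 2)⁻¹)
    (l := nhdsWithin (-1 : ℝ) (Set.Iio (-1)))
    ?_ ?_ ?_ ?_
  · rw [integral_univ_inv_one_add_sq] at this
    exact this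
  · filter_upwards with l
    exact (Continuous.div (by fun_prop) (by fun_prop)
      (fun u => by positivity)).aestronglyMeasurable
  · filter_upwards with l
    filter_upwards with u
    have h1 : (0:ℝ) < 1 + u ^ 2 := by positivity
    have h2 : Real.exp (-((1 + l) * u / ξ) ^ 2) ≤ 1 := by
      exact Real.exp_le_one_iff.mpr (neg_nonpos.mpr (sq_nonneg _))
    rw [Real.norm_eq_abs, abs_div, abs_of_pos (Real.exp_pos _), abs_of_pos h1, div_le_iff₀ h1,
      inv_mul_cancel₀ (ne_of_gt h1)]
    exact h2
  · exact integrable_inv_one_add_sq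
  · filter_upwards with u
    have hc : ContinuousAt (fun l : ℝ => Real.exp (-((1 + l) * u / ξ) ^ 2) / (1 + u ^ 2)) (-1) := by
      apply ContinuousAt.div
      · exact (Real.continuous_exp.comp (by continuity)).continuousAt
      · exact continuousAt_const
      · positivity
    have := hc.tendsto.mono_left
      (nhdsWithin_le_nhds : nhdsWithin (-1:ℝ) (Set.Iio (-1)) ≤ nhds (-1))
    simpa using this

/-- for ξ ≠ 0, lim_{λ→-1⁻} ω(λ,ξ) = 1 + √π/|ξ|. -/
theorem stmt1 (ξ : ℝ) (hξ : ξ ≠ 0) :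
    Tendsto (fun l => omg l ξ) (nhdsWithin (-1) (Set.Iio (-1)))
      (nhds (1 + Real.sqrt Real.pi / |ξ|)) := by
  have hπ : (0:ℝ) < Real.sqrt Real.pi := Real.sqrt_pos.mpr Real.pi_pos
  have hξ' : (0:ℝ) < |ξ| := abs_pos.mpr hξ
  have heq : (fun l => omg l ξ) =ᶠ[nhdsWithin (-1 : ℝ) (Set.Iio (-1))]
      (fun l => 1 + (1 / (Real.sqrt Real.pi * |ξ|)) * Jint l ξ) := by
    filter_upwards [eventually_mem_nhdsWithin] with l hl
    rw [omg, lemA l ξ hξ hl]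
    ring
  have h2 : Tendsto (fun l => 1 + (1 / (Real.sqrt Real.pi * |ξ|)) * Jint l ξ)
      (nhdsWithin (-1 : ℝ) (Set.Iio (-1)))
      (nhds (1 + (1 / (Real.sqrt Real.pi * |ξ|)) * Real.pi)) :=
    tendsto_const_nhds.add ((lemB ξ hξ).const_mul _)
  have h3 : 1 + (1 / (Real.sqrt Real.pi * |ξ|)) * Real.pi
      = 1 + Real.sqrt Real.pi / |ξ| := by
    have : Real.sqrt Real.pi * Real.sqrt Real.pi = Real.pi :=
      Real.mul_self_sqrt Real.pi_pos.le
    field_simp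
    nlinarith [this]
  rw [← h3]
  exact h2.congr' heq.symm
end

section
/- For each ξ with 0 < ξ < √π there exists a unique real λ*(ξ) with λ*(ξ) > -1 such that ω(λ*(ξ),ξ) = 0, where ω(λ,ξ) = 1 - ∫_ℝ (1+λ) w(v)/((1+λ)^2+(vξ)^2) dv and w(v) = e^{-v^2}/√π; moreover -1 < λ*(ξ) < 0. -/
/-
The substitution `v = (1 + λ) t / ξ` gives `1 - ω(λ, ξ) = G((1 + λ) / ξ) / (ξ √π)` with
`G(a) = ∫ e^{-(a t)²} / (1 + t²) dt`. The function `G` is continuous and strictly decreasing on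
`[0, ∞)`, with `G(0) = ∫ 1 / (1 + t²) = π > ξ √π` and, dropping the factor `1 / (1 + t²) ≤ 1`,
`G(1 / ξ) < ∫ e^{-(t / ξ)²} dt = ξ √π`. So `G(a) = ξ √π` has exactly one root `a ∈ (0, 1 / ξ)`,
and `λ* = a ξ - 1 ∈ (-1, 0)`.
-/

open MeasureTheory Real Filter

theorem integral_lt_integral_of_continuous_of_le_of_lt {α : Type*} [TopologicalSpace α]
    [MeasurableSpace α] {μ : Measure α} [μ.IsOpenPosMeasure] {f g : α → ℝ}
    (hf : Continuous f) (hg : Continuous g) (hfi : Integrable f μ) (hgi : Integrable g μ)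
    (hle : f ≤ g) {x : α} (hx : f x < g x) : ∫ y, f y ∂μ < ∫ y, g y ∂μ := by
  have hpos : 0 < ∫ y, (g - f) y ∂μ :=
    integral_pos_of_integrable_nonneg_nonzero (hg.sub hf) (hgi.sub hfi)
      (fun y => sub_nonneg.2 (hle y)) (sub_ne_zero.2 hx.ne')
  rw [Pi.sub_def, integral_sub hgi hfi] at hpos
  linarith

noncomputable def gaussCauchy (a : ℝ) : ℝ :=
  ∫ t : ℝ, exp (-(a * t) ^ 2) / (1 + t ^ 2)

theorem continuous_gaussCauchy_integrand (a : ℝ) :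
    Continuous fun t : ℝ => exp (-(a * t) ^ 2) / (1 + t ^ 2) :=
  Continuous.div (by fun_prop) (by fun_prop) fun _ => by positivity

theorem gaussCauchy_integrand_le (a t : ℝ) :
    exp (-(a * t) ^ 2) / (1 + t ^ 2) ≤ (1 + t ^ 2)⁻¹ := by
  rw [div_eq_mul_inv]
  exact mul_le_of_le_one_left (by positivity) (exp_le_one_iff.2 (neg_nonpos.2 (sq_nonneg _)))

theorem integrable_gaussCauchy_integrand (a : ℝ) :
    Integrable fun t : ℝ => exp (-(a * t) ^ 2) / (1 + t ^ 2) :=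
  integrable_inv_one_add_sq.mono
    (continuous_gaussCauchy_integrand a).aestronglyMeasurable
    (Eventually.of_forall fun t => by
      simpa only [norm_of_nonneg (by positivity : 0 ≤ exp (-(a * t) ^ 2) / (1 + t ^ 2)),
        norm_of_nonneg (by positivity : 0 ≤ (1 + t ^ 2)⁻¹)] using gaussCauchy_integrand_le a t)

theorem continuous_gaussCauchy : Continuous gaussCauchy :=
  continuous_of_dominated
    (fun a => (integrable_gaussCauchy_integrand a).aestronglyMeasurable)
    (fun a => Eventually.of_forall fun t => by
      simpa only [norm_of_nonneg (by positivity : 0 ≤ exp (-(a * t) ^ 2) / (1 + t ^ 2))]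
        using gaussCauchy_integrand_le a t)
    integrable_inv_one_add_sq
    (Eventually.of_forall fun _ => by fun_prop)

theorem gaussCauchy_zero : gaussCauchy 0 = π := by
  simp only [gaussCauchy, zero_mul, ne_eq, OfNat.ofNat_ne_zero, not_false_eq_true, zero_pow,
    neg_zero, exp_zero, one_div]
  exact integral_univ_inv_one_add_sq

theorem strictAntiOn_gaussCauchy : StrictAntiOn gaussCauchy (Set.Ici 0) := by
  intro a ha b _ hab
  have hsq : ∀ t, (a * t) ^ 2 ≤ (b * t) ^ 2 := fun t => by
    rw [mul_pow, mul_pow]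
    exact mul_le_mul_of_nonneg_right (pow_le_pow_left₀ ha hab.le 2) (sq_nonneg t)
  refine integral_lt_integral_of_continuous_of_le_of_lt
    (continuous_gaussCauchy_integrand b)
    (continuous_gaussCauchy_integrand a)
    (integrable_gaussCauchy_integrand b) (integrable_gaussCauchy_integrand a)
    (fun t => div_le_div_of_nonneg_right (exp_le_exp.2 (neg_le_neg (hsq t))) (by positivity))
    (x := 1) ?_
  refine div_lt_div_of_pos_right (exp_lt_exp.2 (neg_lt_neg ?_)) (by positivity)
  simpa only [mul_one] using pow_lt_pow_left₀ hab (Set.mem_Ici.1 ha) two_ne_zero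

theorem gaussCauchy_lt_sqrt_pi_div {a : ℝ} (ha : 0 < a) : gaussCauchy a < √π / a := by
  have hgauss : ∫ t : ℝ, exp (-(a * t) ^ 2) = √π / a := by
    simp_rw [mul_pow, ← neg_mul]
    rw [integral_gaussian, sqrt_div pi_pos.le, sqrt_sq ha.le]
  rw [← hgauss]
  refine integral_lt_integral_of_continuous_of_le_of_lt
    (continuous_gaussCauchy_integrand a) (by fun_prop)
    (integrable_gaussCauchy_integrand a) ?_
    (fun t => div_le_self (exp_pos _).le (le_add_of_nonneg_right (sq_nonneg t)))
    (x := 1) (div_lt_self (exp_pos _) (by norm_num))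
  simpa only [mul_pow, ← neg_mul] using integrable_exp_neg_mul_sq (by positivity : 0 < a ^ 2)

theorem integral_mul_w_div_add_sq_eq_gaussCauchy {μ ξ : ℝ} (hμ : 0 < μ) (hξ : 0 < ξ) :
    ∫ v : ℝ, μ * w v / (μ ^ 2 + (v * ξ) ^ 2) = gaussCauchy (μ / ξ) / (ξ * √π) := by
  have hsubst := Measure.integral_comp_mul_left
    (fun v : ℝ => μ * w v / (μ ^ 2 + (v * ξ) ^ 2)) (μ / ξ)
  have hintegrand : (fun t : ℝ => μ * w (μ / ξ * t) / (μ ^ 2 + (μ / ξ * t * ξ) ^ 2))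
      = fun t => (μ * √π)⁻¹ * (exp (-(μ / ξ * t) ^ 2) / (1 + t ^ 2)) := by
    funext t
    rw [w, show μ / ξ * t * ξ = μ * t by field_simp]
    field_simp
  rw [hintegrand, integral_const_mul, abs_of_pos (by positivity), smul_eq_mul] at hsubst
  rw [gaussCauchy, eq_div_iff (by positivity)]
  field_simp at hsubst ⊢
  linarith

theorem omg_eq_zero_iff {l ξ : ℝ} (hl : -1 < l) (hξ : 0 < ξ) :
    omg l ξ = 0 ↔ gaussCauchy ((1 + l) / ξ) = ξ * √π := by
  have hc : 0 < ξ * √π := by positivity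
  rw [omg, integral_mul_w_div_add_sq_eq_gaussCauchy (by linarith) hξ, sub_eq_zero, eq_comm,
    div_eq_one_iff_eq hc.ne']

/-- for 0 < ξ < √π there is a unique λ* > -1 with ω(λ*,ξ) = 0,
and moreover -1 < λ* < 0. -/
theorem stmt4 (ξ : ℝ) (hξ0 : 0 < ξ) (hξπ : ξ < Real.sqrt Real.pi) :
    ∃ l : ℝ, (-1 < l ∧ l < 0) ∧ omg l ξ = 0 ∧
      ∀ l' : ℝ, -1 < l' → omg l' ξ = 0 → l' = l := by
  have hlow : gaussCauchy ξ⁻¹ < ξ * √π := by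
    simpa only [div_inv_eq_mul, mul_comm] using gaussCauchy_lt_sqrt_pi_div (inv_pos.2 hξ0)
  have hhigh : ξ * √π < gaussCauchy 0 := by
    rw [gaussCauchy_zero]
    exact (mul_lt_mul_of_pos_right hξπ (sqrt_pos.2 pi_pos)).trans_eq (mul_self_sqrt pi_pos.le)
  obtain ⟨a, ⟨ha0, haξ⟩, ha⟩ := intermediate_value_Ioo' (inv_pos.2 hξ0).le
    continuous_gaussCauchy.continuousOn ⟨hlow, hhigh⟩
  have haξ_lt_one : a * ξ < 1 := (lt_mul_inv_iff₀ hξ0).1 (by rwa [one_mul])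
  have hl : -1 < a * ξ - 1 := by linarith [mul_pos ha0 hξ0]
  refine ⟨a * ξ - 1, ⟨hl, by linarith⟩, ?_, fun l' hl' hzero => ?_⟩
  · rw [omg_eq_zero_iff hl hξ0, add_sub_cancel, mul_div_cancel_right₀ _ hξ0.ne', ha]
  · rw [omg_eq_zero_iff hl' hξ0, ← ha] at hzero
    have hroot := strictAntiOn_gaussCauchy.injOn
      (Set.mem_Ici.2 (div_nonneg (by linarith) hξ0.le)) (Set.mem_Ici.2 ha0.le) hzero
    rw [div_eq_iff hξ0.ne'] at hroot
    linarith
end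

section
/- For x > 0, the map x ↦ x f(x) where f(x) = ∫_ℝ x w(v)/(x^2+v^2) dv with w(v)=e^{-v^2}/√π, i.e. x ↦ ∫_ℝ x^2 w(v)/(x^2+v^2) dv, is strictly increasing, tends to 0 as x→0^+ and to 1 as x→∞. -/
open MeasureTheory Real Filter Set Topology

noncomputable def g (x : ℝ) : ℝ := ∫ v : ℝ, x ^ 2 * w v / (x ^ 2 + v ^ 2)

/-!
The kernel `x ^ 2 / (x ^ 2 + v ^ 2)` lies in `[0, 1]`, increases strictly in `x > 0` for
`v ≠ 0`, and tends to `1` as `x → ∞` and to `0` as `x → 0` for `v ≠ 0`. Since `w` is a positive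
probability density and `{0}` is null, dominated convergence (with dominating function `w`) gives
both limits, and integrating the pointwise strict inequality gives strict monotonicity.
-/

lemma w_pos (v : ℝ) : 0 < w v :=
  div_pos (exp_pos _) (sqrt_pos.2 pi_pos)

lemma integrable_w : Integrable w := by
  have h : Integrable fun v : ℝ => exp (-v ^ 2) := by
    simpa using integrable_exp_neg_mul_sq one_pos
  exact h.div_const _

lemma integral_w : ∫ v, w v = 1 := by
  have h : ∫ v : ℝ, exp (-v ^ 2) = √π := by simpa using integral_gaussian 1
  simp only [w, integral_div, h, div_self (sqrt_pos.2 pi_pos).ne']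

section Kernel

variable {x y v a : ℝ}

lemma norm_sq_mul_div_sq_add_sq_le (hx : x ≠ 0) (v a : ℝ) :
    ‖x ^ 2 * a / (x ^ 2 + v ^ 2)‖ ≤ ‖a‖ := by
  have hden : 0 < x ^ 2 + v ^ 2 := add_pos_of_pos_of_nonneg (sq_pos_of_ne_zero hx) (sq_nonneg v)
  rw [norm_div, norm_mul, Real.norm_of_nonneg hden.le, Real.norm_of_nonneg (sq_nonneg x),
    div_le_iff₀ hden]
  nlinarith [norm_nonneg a, mul_nonneg (norm_nonneg a) (sq_nonneg v)]

lemma sq_mul_div_sq_add_sq_le (hx : 0 < x) (hxy : x ≤ y) (ha : 0 ≤ a) (v : ℝ) :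
    x ^ 2 * a / (x ^ 2 + v ^ 2) ≤ y ^ 2 * a / (y ^ 2 + v ^ 2) := by
  have hy : 0 < y := hx.trans_le hxy
  rw [div_le_div_iff₀ (by positivity) (by positivity)]
  have hsq : x ^ 2 ≤ y ^ 2 := pow_le_pow_left₀ hx.le hxy 2
  nlinarith [mul_nonneg (mul_nonneg ha (sq_nonneg v)) (sub_nonneg.2 hsq)]

lemma sq_mul_div_sq_add_sq_lt (hx : 0 < x) (hxy : x < y) (ha : 0 < a) (hv : v ≠ 0) :
    x ^ 2 * a / (x ^ 2 + v ^ 2) < y ^ 2 * a / (y ^ 2 + v ^ 2) := by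
  have hy : 0 < y := hx.trans hxy
  rw [div_lt_div_iff₀ (by positivity) (by positivity)]
  have hsq : x ^ 2 < y ^ 2 := pow_lt_pow_left₀ hxy hx.le two_ne_zero
  have hv2 : 0 < v ^ 2 := by positivity
  nlinarith [mul_pos (mul_pos ha hv2) (sub_pos.2 hsq)]

lemma tendsto_sq_mul_div_sq_add_sq_atTop (v a : ℝ) :
    Tendsto (fun x => x ^ 2 * a / (x ^ 2 + v ^ 2)) atTop (𝓝 a) := by
  have hden : Tendsto (fun x : ℝ => x ^ 2 + v ^ 2) atTop atTop :=
    tendsto_atTop_add_const_right _ _ (tendsto_pow_atTop two_ne_zero)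
  have hsmall : Tendsto (fun x => a - a * v ^ 2 / (x ^ 2 + v ^ 2)) atTop (𝓝 (a - 0)) :=
    tendsto_const_nhds.sub (tendsto_const_nhds.div_atTop hden)
  rw [sub_zero] at hsmall
  refine hsmall.congr' ?_
  filter_upwards [eventually_ne_atTop 0] with x hx
  field_simp
  ring

lemma tendsto_sq_mul_div_sq_add_sq_nhds_zero (a : ℝ) (hv : v ≠ 0) :
    Tendsto (fun x => x ^ 2 * a / (x ^ 2 + v ^ 2)) (𝓝 0) (𝓝 0) := by
  have hcont : Continuous fun x : ℝ => x ^ 2 * a / (x ^ 2 + v ^ 2) :=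
    by fun_prop (disch := intro x; positivity)
  simpa using hcont.tendsto 0

end Kernel

section Integral

variable {μ : Measure ℝ} {f : ℝ → ℝ}

lemma integrable_sq_mul_div_sq_add_sq (hf : Integrable f μ) {x : ℝ} (hx : x ≠ 0) :
    Integrable (fun v => x ^ 2 * f v / (x ^ 2 + v ^ 2)) μ := by
  refine hf.mono ?_ (Eventually.of_forall fun v => norm_sq_mul_div_sq_add_sq_le hx v (f v))
  have hden : Measurable fun v : ℝ => x ^ 2 + v ^ 2 := by fun_prop
  exact ((hf.aemeasurable.const_mul _).div hden.aemeasurable).aestronglyMeasurable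

lemma tendsto_integral_sq_mul_div_sq_add_sq {l : Filter ℝ} [l.IsCountablyGenerated]
    (hl : ∀ᶠ x in l, x ≠ 0) (hf : Integrable f μ) {φ : ℝ → ℝ}
    (hlim : ∀ᵐ v ∂μ, Tendsto (fun x => x ^ 2 * f v / (x ^ 2 + v ^ 2)) l (𝓝 (φ v))) :
    Tendsto (fun x => ∫ v, x ^ 2 * f v / (x ^ 2 + v ^ 2) ∂μ) l (𝓝 (∫ v, φ v ∂μ)) := by
  refine tendsto_integral_filter_of_dominated_convergence (fun v => ‖f v‖) ?_ ?_ hf.norm hlim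
  · filter_upwards [hl] with x hx
    exact (integrable_sq_mul_div_sq_add_sq hf hx).aestronglyMeasurable
  · filter_upwards [hl] with x hx
    exact Eventually.of_forall fun v => norm_sq_mul_div_sq_add_sq_le hx v (f v)

lemma tendsto_integral_sq_mul_div_sq_add_sq_atTop (hf : Integrable f μ) :
    Tendsto (fun x => ∫ v, x ^ 2 * f v / (x ^ 2 + v ^ 2) ∂μ) atTop (𝓝 (∫ v, f v ∂μ)) :=
  tendsto_integral_sq_mul_div_sq_add_sq (eventually_ne_atTop 0) hf
    (Eventually.of_forall fun v => tendsto_sq_mul_div_sq_add_sq_atTop v (f v))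

lemma tendsto_integral_sq_mul_div_sq_add_sq_nhdsGT_zero [NullSingletonClass μ]
    (hf : Integrable f μ) :
    Tendsto (fun x => ∫ v, x ^ 2 * f v / (x ^ 2 + v ^ 2) ∂μ) (𝓝[>] 0) (𝓝 0) := by
  have hl : ∀ᶠ x in 𝓝[>] (0 : ℝ), x ≠ 0 :=
    eventually_mem_nhdsWithin.mono fun x (hx : 0 < x) => hx.ne'
  have h := tendsto_integral_sq_mul_div_sq_add_sq (φ := 0) hl hf ((μ.ae_ne 0).mono fun v hv =>
    (tendsto_sq_mul_div_sq_add_sq_nhds_zero (f v) hv).mono_left nhdsWithin_le_nhds)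
  simpa using h

lemma strictMonoOn_integral_sq_mul_div_sq_add_sq [NullSingletonClass μ] [NeZero μ]
    (hf : Integrable f μ) (hpos : ∀ v, 0 < f v) :
    StrictMonoOn (fun x => ∫ v, x ^ 2 * f v / (x ^ 2 + v ^ 2) ∂μ) (Ioi 0) := by
  intro x (hx : 0 < x) y (hy : 0 < y) hxy
  rw [← sub_pos, ← integral_sub (integrable_sq_mul_div_sq_add_sq hf hy.ne')
    (integrable_sq_mul_div_sq_add_sq hf hx.ne'), integral_pos_iff_support_of_nonneg_ae]
  · have hsupp : {(0 : ℝ)}ᶜ ⊆ Function.support fun v =>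
        y ^ 2 * f v / (y ^ 2 + v ^ 2) - x ^ 2 * f v / (x ^ 2 + v ^ 2) := fun v hv =>
      (sub_pos.2 (sq_mul_div_sq_add_sq_lt hx hxy (hpos v) hv)).ne'
    have hcompl : μ {(0 : ℝ)}ᶜ = μ univ := by
      rw [← Measure.restrict_apply_univ, restrict_compl_singleton]
    refine lt_of_lt_of_le ?_ (measure_mono hsupp)
    rw [hcompl, Measure.measure_univ_pos]
    exact NeZero.ne μ
  · exact Eventually.of_forall fun v =>
      sub_nonneg.2 (sq_mul_div_sq_add_sq_le hx hxy.le (hpos v).le v)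
  · exact (integrable_sq_mul_div_sq_add_sq hf hy.ne').sub
      (integrable_sq_mul_div_sq_add_sq hf hx.ne')

end Integral

/-- x ↦ x f(x) = ∫ x² w(v)/(x²+v²) dv is strictly increasing on
(0,∞), tends to 0 as x → 0⁺ and to 1 as x → ∞. -/
theorem stmt7 :
    StrictMonoOn g (Set.Ioi 0) ∧
    Tendsto g (nhdsWithin 0 (Set.Ioi 0)) (nhds 0) ∧
    Tendsto g Filter.atTop (nhds 1) := by
  refine ⟨strictMonoOn_integral_sq_mul_div_sq_add_sq integrable_w w_pos,
    tendsto_integral_sq_mul_div_sq_add_sq_nhdsGT_zero integrable_w, ?_⟩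
  rw [← integral_w]
  exact tendsto_integral_sq_mul_div_sq_add_sq_atTop integrable_w
end
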